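/- arXiv:0707.3609 — 5 statements merged into one kernel-verified Lean document; each statement's English description precedes it below -/
import Mathlib

section
/- Let X be a length space with basepoint *, and let X̄ be the set of all arclength-parameterized weakly normal rectifiable paths (ρ-paths) c:[0,L(c)]→X starting at *. Define d(c₁,c₂) := L(c₁) + L(c₂) − 2L(c₁∧c₂), where c₁∧c₂ is the restriction of both paths to the largest initial interval [0,b] on which they coincide. Then d is a metric on X̄. -/
open Set

/-- An arclength-parameterized weakly normal rectifiable path (ρ-path) in a metric
space `X`.  The path is defined on `[0, len]`, extended constantly outside. -/
structure RPath (X : Type*) [MetricSpace X] where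
  /-- the length of the path -/
  len : ℝ
  len_nonneg : 0 ≤ len
  toFun : ℝ → X
  contOn : ContinuousOn toFun (Icc 0 len)
  /-- arclength parameterization: the length of the restriction to `[s,t]` is `t - s`. -/
  arclength : ∀ s t : ℝ, 0 ≤ s → s ≤ t → t ≤ len →
    eVariationOn toFun (Icc s t) = ENNReal.ofReal (t - s)
  clamp_left : ∀ t : ℝ, t ≤ 0 → toFun t = toFun 0
  clamp_right : ∀ t : ℝ, len ≤ t → toFun t = toFun len
  /-- weak normality: no nontrivial subsegment `[u,v]` with equal endpoints is
  null-homotopic in its own image rel endpoints. -/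
  weaklyNormal : ¬ ∃ u v : ℝ, 0 ≤ u ∧ u < v ∧ v ≤ len ∧ toFun u = toFun v ∧
    ∃ H : ℝ × ℝ → X, ContinuousOn H (Icc u v ×ˢ Icc 0 1) ∧
      (∀ t ∈ Icc u v, H (t, 0) = toFun t) ∧
      (∀ t ∈ Icc u v, H (t, 1) = toFun u) ∧
      (∀ s ∈ Icc (0:ℝ) 1, H (u, s) = toFun u ∧ H (v, s) = toFun v) ∧
      (∀ p ∈ Icc u v ×ˢ Icc (0:ℝ) 1, H p ∈ toFun '' Icc u v)

namespace RPath

variable {X : Type*} [MetricSpace X]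

/-- `c` starts at the point `p`. -/
def StartsAt (c : RPath X) (p : X) : Prop := c.toFun 0 = p

/-- `c` ends at the point `p`. -/
def EndsAt (c : RPath X) (p : X) : Prop := c.toFun c.len = p

/-- The length `L(c₁ ∧ c₂)` of the longest common initial segment of two paths. -/
noncomputable def wedgeLen (c₁ c₂ : RPath X) : ℝ :=
  sSup {b : ℝ | 0 ≤ b ∧ b ≤ c₁.len ∧ b ≤ c₂.len ∧ ∀ t ∈ Icc 0 b, c₁.toFun t = c₂.toFun t}

/-- The distance `d(c₁,c₂) = L(c₁) + L(c₂) - 2 L(c₁ ∧ c₂)`. -/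
noncomputable def rhoDist (c₁ c₂ : RPath X) : ℝ :=
  c₁.len + c₂.len - 2 * wedgeLen c₁ c₂

end RPath

/-- A length space: a metric space with at least two points in which any two points
are joined by paths of length arbitrarily close to the distance between them. -/
def IsLengthSpace (X : Type*) [MetricSpace X] : Prop :=
  (∃ x y : X, x ≠ y) ∧
  ∀ x y : X, ∀ ε : ℝ, 0 < ε → ∃ (c : ℝ → X) (b : ℝ), 0 ≤ b ∧
    ContinuousOn c (Icc 0 b) ∧ c 0 = x ∧ c b = y ∧
    eVariationOn c (Icc 0 b) < ENNReal.ofReal (dist x y + ε)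

/-!
Two ρ-paths from a common point agree on a closed initial interval `[0, L(c₁ ∧ c₂)]`,
since paths are continuous, so the supremum defining `L(c₁ ∧ c₂)` is attained. Agreement
with `c₂` on initial intervals is transitive, hence
`min (L(c₁ ∧ c₂)) (L(c₂ ∧ c₃)) ≤ L(c₁ ∧ c₃)`; together with `L(cᵢ ∧ c₂) ≤ L(c₂)` this is the
triangle inequality. If `d(c₁, c₂) = 0`, both paths equal their common prefix, and the
clamping outside `[0, L]` makes them equal as functions on `ℝ`.
-/

namespace RPath

variable {X : Type*} [MetricSpace X]

theorem ext_of_eqOn_Icc {c₁ c₂ : RPath X} (hlen : c₁.len = c₂.len)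
    (hfun : EqOn c₁.toFun c₂.toFun (Icc 0 c₁.len)) : c₁ = c₂ := by
  have hfun' : c₁.toFun = c₂.toFun := by
    funext t
    rcases le_total t 0 with ht | ht
    · rw [c₁.clamp_left t ht, c₂.clamp_left t ht]
      exact hfun ⟨le_rfl, c₁.len_nonneg⟩
    rcases le_total t c₁.len with ht' | ht'
    · exact hfun ⟨ht, ht'⟩
    · rw [c₁.clamp_right t ht', c₂.clamp_right t (hlen ▸ ht'), ← hlen]
      exact hfun ⟨c₁.len_nonneg, le_rfl⟩
  cases c₁
  cases c₂
  congr

theorem wedgeLen_nonneg (c₁ c₂ : RPath X) : 0 ≤ wedgeLen c₁ c₂ :=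
  Real.sSup_nonneg fun _ hb => hb.1

theorem wedgeLen_le_left (c₁ c₂ : RPath X) : wedgeLen c₁ c₂ ≤ c₁.len :=
  Real.sSup_le (fun _ hb => hb.2.1) c₁.len_nonneg

theorem wedgeLen_le_right (c₁ c₂ : RPath X) : wedgeLen c₁ c₂ ≤ c₂.len :=
  Real.sSup_le (fun _ hb => hb.2.2.1) c₂.len_nonneg

theorem le_wedgeLen {c₁ c₂ : RPath X} {b : ℝ} (hb : 0 ≤ b) (h₁ : b ≤ c₁.len)
    (h₂ : b ≤ c₂.len) (h : EqOn c₁.toFun c₂.toFun (Icc 0 b)) : b ≤ wedgeLen c₁ c₂ :=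
  le_csSup ⟨c₁.len, fun _ hb => hb.2.1⟩ ⟨hb, h₁, h₂, h⟩

theorem wedgeLen_comm (c₁ c₂ : RPath X) : wedgeLen c₁ c₂ = wedgeLen c₂ c₁ := by
  unfold wedgeLen
  congr with b
  exact ⟨fun ⟨h0, h₁, h₂, h⟩ => ⟨h0, h₂, h₁, fun t ht => (h t ht).symm⟩,
    fun ⟨h0, h₂, h₁, h⟩ => ⟨h0, h₁, h₂, fun t ht => (h t ht).symm⟩⟩

theorem wedgeLen_self (c : RPath X) : wedgeLen c c = c.len :=
  (wedgeLen_le_left c c).antisymm (le_wedgeLen c.len_nonneg le_rfl le_rfl (eqOn_refl _ _))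

theorem eqOn_Icc_wedgeLen {c₁ c₂ : RPath X} (h0 : c₁.toFun 0 = c₂.toFun 0) :
    EqOn c₁.toFun c₂.toFun (Icc 0 (wedgeLen c₁ c₂)) := by
  have hstart : EqOn c₁.toFun c₂.toFun (Icc 0 0) := by
    rw [Icc_self]
    exact eqOn_singleton.2 h0
  rcases (wedgeLen_nonneg c₁ c₂).eq_or_lt with hb | hb
  · rwa [← hb]
  have hIco : EqOn c₁.toFun c₂.toFun (Ico 0 (wedgeLen c₁ c₂)) := by
    rintro t ⟨ht0, htb⟩
    obtain ⟨s, hs, hts⟩ :=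
      exists_lt_of_lt_csSup (by exact ⟨0, le_rfl, c₁.len_nonneg, c₂.len_nonneg, hstart⟩) htb
    exact hs.2.2.2 t ⟨ht0, hts.le⟩
  exact hIco.of_subset_closure (c₁.contOn.mono (Icc_subset_Icc_right (wedgeLen_le_left c₁ c₂)))
    (c₂.contOn.mono (Icc_subset_Icc_right (wedgeLen_le_right c₁ c₂))) Ico_subset_Icc_self
    (closure_Ico hb.ne).ge

theorem min_wedgeLen_le {c₁ c₂ c₃ : RPath X} (h₁₂ : c₁.toFun 0 = c₂.toFun 0)
    (h₂₃ : c₂.toFun 0 = c₃.toFun 0) :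
    min (wedgeLen c₁ c₂) (wedgeLen c₂ c₃) ≤ wedgeLen c₁ c₃ := by
  set m := min (wedgeLen c₁ c₂) (wedgeLen c₂ c₃)
  have hagree₁₂ : EqOn c₁.toFun c₂.toFun (Icc 0 m) :=
    (eqOn_Icc_wedgeLen h₁₂).mono (Icc_subset_Icc_right (min_le_left _ _))
  have hagree₂₃ : EqOn c₂.toFun c₃.toFun (Icc 0 m) :=
    (eqOn_Icc_wedgeLen h₂₃).mono (Icc_subset_Icc_right (min_le_right _ _))
  exact le_wedgeLen (le_min (wedgeLen_nonneg _ _) (wedgeLen_nonneg _ _))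
    ((min_le_left _ _).trans (wedgeLen_le_left _ _))
    ((min_le_right _ _).trans (wedgeLen_le_right _ _)) (hagree₁₂.trans hagree₂₃)

theorem rhoDist_nonneg (c₁ c₂ : RPath X) : 0 ≤ rhoDist c₁ c₂ := by
  have := wedgeLen_le_left c₁ c₂
  have := wedgeLen_le_right c₁ c₂
  unfold rhoDist
  linarith

theorem rhoDist_self (c : RPath X) : rhoDist c c = 0 := by
  rw [rhoDist, wedgeLen_self]
  ring

theorem rhoDist_comm (c₁ c₂ : RPath X) : rhoDist c₁ c₂ = rhoDist c₂ c₁ := by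
  rw [rhoDist, rhoDist, wedgeLen_comm, add_comm c₁.len]

theorem eq_of_rhoDist_eq_zero {c₁ c₂ : RPath X} (h0 : c₁.toFun 0 = c₂.toFun 0)
    (hd : rhoDist c₁ c₂ = 0) : c₁ = c₂ := by
  have h₁ := wedgeLen_le_left c₁ c₂
  have h₂ := wedgeLen_le_right c₁ c₂
  unfold rhoDist at hd
  have hlen₁ : c₁.len = wedgeLen c₁ c₂ := by linarith
  have hlen₂ : c₂.len = wedgeLen c₁ c₂ := by linarith
  exact ext_of_eqOn_Icc (hlen₁.trans hlen₂.symm) (hlen₁ ▸ eqOn_Icc_wedgeLen h0)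

theorem rhoDist_triangle {c₁ c₂ c₃ : RPath X} (h₁₂ : c₁.toFun 0 = c₂.toFun 0)
    (h₂₃ : c₂.toFun 0 = c₃.toFun 0) :
    rhoDist c₁ c₃ ≤ rhoDist c₁ c₂ + rhoDist c₂ c₃ := by
  have hmin := min_wedgeLen_le h₁₂ h₂₃
  have hmax := max_le (wedgeLen_le_right c₁ c₂) (wedgeLen_le_left c₂ c₃)
  have := min_add_max (wedgeLen c₁ c₂) (wedgeLen c₂ c₃)
  unfold rhoDist
  linarith

end RPath

theorem rhoDist_is_metric_general {X : Type*} [MetricSpace X] (base : X) :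
    (∀ c₁ c₂ : RPath X, c₁.StartsAt base → c₂.StartsAt base → 0 ≤ RPath.rhoDist c₁ c₂) ∧
    (∀ c : RPath X, c.StartsAt base → RPath.rhoDist c c = 0) ∧
    (∀ c₁ c₂ : RPath X, c₁.StartsAt base → c₂.StartsAt base →
      RPath.rhoDist c₁ c₂ = RPath.rhoDist c₂ c₁) ∧
    (∀ c₁ c₂ : RPath X, c₁.StartsAt base → c₂.StartsAt base →
      RPath.rhoDist c₁ c₂ = 0 → c₁ = c₂) ∧
    (∀ c₁ c₂ c₃ : RPath X, c₁.StartsAt base → c₂.StartsAt base → c₃.StartsAt base →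
      RPath.rhoDist c₁ c₃ ≤ RPath.rhoDist c₁ c₂ + RPath.rhoDist c₂ c₃) :=
  ⟨fun c₁ c₂ _ _ => RPath.rhoDist_nonneg c₁ c₂,
    fun c _ => RPath.rhoDist_self c,
    fun c₁ c₂ _ _ => RPath.rhoDist_comm c₁ c₂,
    fun _ _ h₁ h₂ => RPath.eq_of_rhoDist_eq_zero (Eq.trans h₁ h₂.symm),
    fun _ _ _ h₁ h₂ h₃ => RPath.rhoDist_triangle (Eq.trans h₁ h₂.symm) (Eq.trans h₂ h₃.symm)⟩

/-- For a length space `X` with basepoint `*`, the function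
`d(c₁,c₂) = L(c₁) + L(c₂) - 2 L(c₁ ∧ c₂)` is a metric on the set `X̄` of ρ-paths
starting at `*`. -/
theorem rhoDist_is_metric {X : Type*} [MetricSpace X] (hX : IsLengthSpace X) (base : X) :
    (∀ c₁ c₂ : RPath X, c₁.StartsAt base → c₂.StartsAt base → 0 ≤ RPath.rhoDist c₁ c₂) ∧
    (∀ c : RPath X, c.StartsAt base → RPath.rhoDist c c = 0) ∧
    (∀ c₁ c₂ : RPath X, c₁.StartsAt base → c₂.StartsAt base →
      RPath.rhoDist c₁ c₂ = RPath.rhoDist c₂ c₁) ∧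
    (∀ c₁ c₂ : RPath X, c₁.StartsAt base → c₂.StartsAt base →
      RPath.rhoDist c₁ c₂ = 0 → c₁ = c₂) ∧
    (∀ c₁ c₂ c₃ : RPath X, c₁.StartsAt base → c₂.StartsAt base → c₃.StartsAt base →
      RPath.rhoDist c₁ c₃ ≤ RPath.rhoDist c₁ c₂ + RPath.rhoDist c₂ c₃) :=
  rhoDist_is_metric_general base
end

section
/- If f : X → Y is a URL-map between length spaces, then X is complete if and only if Y is complete. -/
open Set

/-- `c : [a,b] → X` is a rectifiable path: continuous with finite length. -/
def IsRectPath {X : Type*} [MetricSpace X] (c : ℝ → X) (a b : ℝ) : Prop :=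
  a ≤ b ∧ ContinuousOn c (Icc a b) ∧ eVariationOn c (Icc a b) ≠ ⊤

/-- `cL` is a lift of the path `c : [a,b] → Y` through `f` starting at `q`. -/
def IsLift {X Y : Type*} [MetricSpace X] [MetricSpace Y] (f : X → Y) (c : ℝ → Y)
    (a b : ℝ) (q : X) (cL : ℝ → X) : Prop :=
  ContinuousOn cL (Icc a b) ∧ cL a = q ∧ ∀ t ∈ Icc a b, f (cL t) = c t

/-- A URL-map (unique rectifiable lifting map): (I) `f` preserves lengths of
rectifiable paths; (II) every rectifiable path in `Y` lifts uniquely through `f`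
starting at any prescribed point of the fiber over its initial point, and the lift
is rectifiable. -/
def IsURLMap {X Y : Type*} [MetricSpace X] [MetricSpace Y] (f : X → Y) : Prop :=
  (∀ (c : ℝ → X) (a b : ℝ), IsRectPath c a b →
    eVariationOn (f ∘ c) (Icc a b) = eVariationOn c (Icc a b)) ∧
  (∀ (c : ℝ → Y) (a b : ℝ), IsRectPath c a b → ∀ q : X, f q = c a →
    (∃ cL : ℝ → X, IsLift f c a b q cL ∧ eVariationOn cL (Icc a b) ≠ ⊤) ∧
    (∀ cL cL' : ℝ → X, IsLift f c a b q cL → IsLift f c a b q cL' →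
      EqOn cL cL' (Icc a b)))

section URLHelpers
open Filter Topology
private lemma continuousOn_union_closed {α β : Type*} [TopologicalSpace α] [TopologicalSpace β]
    {f : α → β} {s t : Set α} (hs : IsClosed s) (ht : IsClosed t)
    (hfs : ContinuousOn f s) (hft : ContinuousOn f t) : ContinuousOn f (s ∪ t) := by
  intro x hx
  rw [continuousWithinAt_union]
  constructor
  · by_cases h : x ∈ s
    · exact hfs x h
    · exact continuousWithinAt_of_notMem_closure (by rwa [hs.closure_eq])
  · by_cases h : x ∈ t
    · exact hft x h
    · exact continuousWithinAt_of_notMem_closure (by rwa [ht.closure_eq])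

private lemma urlmap_edist_le {X Y : Type*} [MetricSpace X] [MetricSpace Y]
    (hX : IsLengthSpace X) {f : X → Y} (hf : IsURLMap f)
    (x y : X) : edist (f x) (f y) ≤ edist x y := by
  have key : ∀ ε : ℝ, 0 < ε → edist (f x) (f y) ≤ ENNReal.ofReal (dist x y + ε) := by
    intro ε hε
    obtain ⟨c, b, hb, hc, hc0, hcb, hvar⟩ := hX.2 x y ε hε
    have hrect : IsRectPath c 0 b := ⟨hb, hc, ne_top_of_lt hvar⟩
    have h2 : edist (f x) (f y) ≤ eVariationOn (f ∘ c) (Icc 0 b) := by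
      have := eVariationOn.edist_le (f ∘ c) (show (0:ℝ) ∈ Icc 0 b from ⟨le_refl _, hb⟩)
        (show b ∈ Icc 0 b from ⟨hb, le_refl _⟩)
      simpa [Function.comp, hc0, hcb] using this
    calc edist (f x) (f y) ≤ eVariationOn (f ∘ c) (Icc 0 b) := h2
      _ = eVariationOn c (Icc 0 b) := hf.1 c 0 b hrect
      _ ≤ ENNReal.ofReal (dist x y + ε) := hvar.le
  refine ENNReal.le_of_forall_pos_le_add fun ε hε _ => ?_
  calc edist (f x) (f y) ≤ ENNReal.ofReal (dist x y + ε) := key ε (by exact_mod_cast hε)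
    _ = ENNReal.ofReal (dist x y) + ENNReal.ofReal ε := ENNReal.ofReal_add dist_nonneg (by positivity)
    _ ≤ edist x y + ε := by
        rw [edist_dist]
        exact add_le_add le_rfl (by simp)

private lemma urlmap_step {X Y : Type*} [MetricSpace X] [MetricSpace Y]
    (hY : IsLengthSpace Y) {f : X → Y} (hf : IsURLMap f)
    (q : X) (y : Y) {δ : ℝ} (hδ : 0 < δ) :
    ∃ z : X, f z = y ∧ edist q z ≤ ENNReal.ofReal (dist (f q) y + δ) := by
  obtain ⟨c, b, hb, hc, hc0, hcb, hvar⟩ := hY.2 (f q) y δ hδ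
  have hrect : IsRectPath c 0 b := ⟨hb, hc, ne_top_of_lt hvar⟩
  obtain ⟨⟨cL, ⟨hcLc, hcL0, hcLf⟩, hcLvar⟩, -⟩ := hf.2 c 0 b hrect q hc0.symm
  refine ⟨cL b, by rw [hcLf b ⟨hb, le_refl b⟩, hcb], ?_⟩
  have h1 : edist q (cL b) ≤ eVariationOn cL (Icc 0 b) := by
    have := eVariationOn.edist_le cL (show (0:ℝ) ∈ Icc 0 b from ⟨le_refl _, hb⟩)
      (show b ∈ Icc 0 b from ⟨hb, le_refl _⟩)
    rwa [hcL0] at this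
  have h2 : eVariationOn (f ∘ cL) (Icc 0 b) = eVariationOn cL (Icc 0 b) :=
    hf.1 cL 0 b ⟨hb, hcLc, hcLvar⟩
  have h3 : eVariationOn (f ∘ cL) (Icc 0 b) = eVariationOn c (Icc 0 b) :=
    eVariationOn.eq_of_eqOn (fun t ht => hcLf t ht)
  exact h1.trans (by rw [← h2, h3]; exact hvar.le)

private lemma cauchy_subseq {Z : Type*} [MetricSpace Z] {u : ℕ → Z} (hu : CauchySeq u)
    (C : ℕ → ℝ) (hC : ∀ n, 0 < C n) :
    ∃ φ : ℕ → ℕ, StrictMono φ ∧ ∀ n, dist (u (φ n)) (u (φ (n+1))) < C n := by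
  obtain ⟨φ, hφ, h⟩ := hu.subseq_mem (V := fun n => {p | dist p.1 p.2 < C n})
    (fun n => Metric.dist_mem_uniformity (hC n))
  exact ⟨φ, hφ, fun n => by have := h n; simpa [dist_comm] using this⟩


private lemma urlmap_forward {X Y : Type*} [MetricSpace X] [MetricSpace Y]
    (hX : IsLengthSpace X) (hY : IsLengthSpace Y) {f : X → Y} (hf : IsURLMap f)
    (hXc : CompleteSpace X) : CompleteSpace Y := by
  haveI := hXc
  have hlip : LipschitzWith 1 f := fun a b => by
    simpa using urlmap_edist_le hX hf a b
  apply Metric.complete_of_cauchySeq_tendsto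
  intro v hv
  obtain ⟨φ, hφ, hd⟩ := cauchy_subseq hv (fun n => (2:ℝ)⁻¹ ^ n) (fun n => by positivity)
  set y : ℕ → Y := fun n => v (φ n) with hy
  obtain ⟨q0, -, -⟩ := hX.1
  obtain ⟨z0, hz0, -⟩ := urlmap_step hY hf q0 (y 0) one_pos
  have step : ∀ (n : ℕ) (z : X), f z = y n → ∃ z', f z' = y (n+1) ∧
      edist z z' ≤ ENNReal.ofReal (dist (y n) (y (n+1)) + (2:ℝ)⁻¹ ^ n) := by
    intro n z hz
    obtain ⟨z', hz', hle⟩ := urlmap_step hY hf z (y (n+1)) (show (0:ℝ) < 2⁻¹ ^ n by positivity)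
    exact ⟨z', hz', by rwa [hz] at hle⟩
  let seq : ∀ n : ℕ, {z : X // f z = y n} := fun n =>
    Nat.rec ⟨z0, hz0⟩ (fun k ih => ⟨(step k ih.1 ih.2).choose, (step k ih.1 ih.2).choose_spec.1⟩) n
  have hseq : ∀ n, edist (seq n).1 (seq (n+1)).1 ≤
      ENNReal.ofReal (dist (y n) (y (n+1)) + (2:ℝ)⁻¹ ^ n) :=
    fun n => (step n (seq n).1 (seq n).2).choose_spec.2
  have hdist : ∀ n, dist (seq n).1 (seq (n+1)).1 ≤ 2 * (2⁻¹:ℝ) ^ n := by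
    intro n
    have h0 : (0:ℝ) ≤ dist (y n) (y (n+1)) + (2:ℝ)⁻¹ ^ n := by positivity
    have h1 : dist (seq n).1 (seq (n+1)).1 ≤ dist (y n) (y (n+1)) + (2:ℝ)⁻¹ ^ n := by
      have := hseq n
      rwa [edist_le_ofReal h0] at this
    have h2 := (hd n).le
    nlinarith [h1, h2]
  have hcs : CauchySeq (fun n => (seq n).1) :=
    cauchySeq_of_le_geometric 2⁻¹ 2 (by norm_num) (fun n => hdist n)
  obtain ⟨ξ, hξ⟩ := cauchySeq_tendsto_of_complete hcs
  have ht : Filter.Tendsto (fun n => f (seq n).1) atTop (𝓝 (f ξ)) :=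
    (hlip.continuous.tendsto ξ).comp hξ
  exact ⟨f ξ, tendsto_nhds_of_cauchySeq_of_subseq hv hφ.tendsto_atTop
    (ht.congr (fun n => (seq n).2))⟩

private lemma urlmap_reverse {X Y : Type*} [MetricSpace X] [MetricSpace Y]
    (hX : IsLengthSpace X) {f : X → Y} (hf : IsURLMap f)
    (hYc : CompleteSpace Y) : CompleteSpace X := by
  haveI := hYc
  classical
  have hlip : LipschitzWith 1 f := fun a b => by simpa using urlmap_edist_le hX hf a b
  apply Metric.complete_of_cauchySeq_tendsto
  intro u hu
  obtain ⟨φ, hφ, hd⟩ := cauchy_subseq hu (fun n => (2:ℝ)⁻¹ ^ (n+2)) (fun n => by positivity)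
  set x : ℕ → X := fun n => u (φ n) with hxdef
  -- short paths between consecutive points
  have hpaths : ∀ n : ℕ, ∃ (g : ℝ → X) (b : ℝ), 0 ≤ b ∧ ContinuousOn g (Icc 0 b) ∧
      g 0 = x n ∧ g b = x (n+1) ∧
      eVariationOn g (Icc 0 b) ≤ ENNReal.ofReal ((2:ℝ)⁻¹ ^ (n+1)) := by
    intro n
    obtain ⟨g, b, hb, hgc, hg0, hgb, hv⟩ := hX.2 (x n) (x (n+1)) ((2:ℝ)⁻¹ ^ (n+2)) (by positivity)
    refine ⟨g, b, hb, hgc, hg0, hgb, hv.le.trans (ENNReal.ofReal_le_ofReal ?_)⟩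
    have h1 := (hd n).le
    have e : (2:ℝ)⁻¹ ^ (n+2) + (2:ℝ)⁻¹ ^ (n+2) = (2:ℝ)⁻¹ ^ (n+1) := by ring
    linarith
  choose g b hb hgc hg0 hgb hgv using hpaths
  -- the time grid
  set t : ℕ → ℝ := fun n => 1 - (2:ℝ)⁻¹ ^ n with htdef
  have ht0 : t 0 = 0 := by simp [htdef]
  have htmono : StrictMono t := by
    intro m n hmn
    have h1 : (2:ℝ)⁻¹ ^ n < (2:ℝ)⁻¹ ^ m :=
      pow_lt_pow_right_of_lt_one₀ (by norm_num) (by norm_num) hmn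
    simp only [htdef]
    linarith
  have htlt : ∀ n, t n < 1 := fun n => by
    have h1 : (0:ℝ) < (2:ℝ)⁻¹ ^ n := by positivity
    simp only [htdef]; linarith
  have ht01 : ∀ n, t n ∈ Icc (0:ℝ) 1 := fun n =>
    ⟨by have := htmono.monotone (Nat.zero_le n); rwa [ht0] at this, (htlt n).le⟩
  have httendsto : Filter.Tendsto t atTop (𝓝 1) := by
    have h1 : Filter.Tendsto (fun n : ℕ => (2:ℝ)⁻¹ ^ n) atTop (𝓝 0) :=
      tendsto_pow_atTop_nhds_zero_of_lt_one (by norm_num) (by norm_num)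
    have h2 : Filter.Tendsto (fun n : ℕ => 1 - (2:ℝ)⁻¹ ^ n) atTop (𝓝 (1 - 0)) :=
      Filter.Tendsto.sub tendsto_const_nhds h1
    simpa [htdef] using h2
  -- affine reparametrizations
  set k : ℕ → ℝ := fun n => (2:ℝ) ^ (n+1) * b n with hkdef
  have hk : ∀ n, 0 ≤ k n := fun n => mul_nonneg (by positivity) (hb n)
  set A : ℕ → ℝ → ℝ := fun n s => (s - t n) * k n with hAdef
  have hA1 : ∀ n, A n (t n) = 0 := by intro n; simp [hAdef]
  have htdiff : ∀ n, t (n+1) - t n = (2:ℝ)⁻¹ ^ (n+1) := by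
    intro n; simp only [htdef]; ring
  have hA2 : ∀ n, A n (t (n+1)) = b n := by
    intro n
    have h1 : (2:ℝ)⁻¹ ^ (n+1) * (2:ℝ) ^ (n+1) = 1 := by
      rw [← mul_pow]; norm_num
    calc A n (t (n+1)) = (t (n+1) - t n) * k n := rfl
      _ = ((2:ℝ)⁻¹ ^ (n+1) * (2:ℝ) ^ (n+1)) * b n := by rw [htdiff n, hkdef]; ring
      _ = b n := by rw [h1, one_mul]
  have hAmono : ∀ n, Monotone (A n) := fun n a a' haa' => by
    simp only [hAdef]
    exact mul_le_mul_of_nonneg_right (by linarith) (hk n)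
  have hAcont : ∀ n, Continuous (A n) :=
    fun n => (continuous_id.sub continuous_const).mul continuous_const
  have hAmaps : ∀ n, MapsTo (A n) (Icc (t n) (t (n+1))) (Icc 0 (b n)) := by
    intro n s hs
    exact ⟨by rw [← hA1 n]; exact hAmono n hs.1, by rw [← hA2 n]; exact hAmono n hs.2⟩
  have hAimg : ∀ n, A n '' Icc (t n) (t (n+1)) = Icc 0 (b n) := by
    intro n
    have he : A n = (fun z => z * k n) ∘ (fun s => s - t n) := rfl
    have hle : t n - t n ≤ t (n+1) - t n :=
      sub_le_sub_right (htmono (Nat.lt_succ_self n)).le (t n)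
    rw [he, image_comp, image_sub_const_Icc, image_mul_right_Icc hle (hk n), sub_self, zero_mul,
      show (t (n+1) - t n) * k n = b n from by simpa [hAdef] using hA2 n]
  -- the pieces
  set P : ℕ → ℝ → X := fun n s => g n (A n s) with hPdef
  have hPcont : ∀ n, ContinuousOn (P n) (Icc (t n) (t (n+1))) := fun n =>
    (hgc n).comp (hAcont n).continuousOn (hAmaps n)
  have hPl : ∀ n, P n (t n) = x n := fun n => by
    simp only [hPdef]; rw [hA1 n, hg0 n]
  have hPr : ∀ n, P n (t (n+1)) = x (n+1) := fun n => by
    simp only [hPdef]; rw [hA2 n, hgb n]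
  have hPvar : ∀ n, eVariationOn (P n) (Icc (t n) (t (n+1))) = eVariationOn (g n) (Icc 0 (b n)) := by
    intro n
    have h1 := eVariationOn.comp_eq_of_monotoneOn (g n) (A n)
      ((hAmono n).monotoneOn (Icc (t n) (t (n+1))))
    rw [hAimg n] at h1
    exact h1
  -- existence of a grid index
  have hexN : ∀ s : ℝ, s < 1 → ∃ n, s < t (n+1) := by
    intro s hs
    obtain ⟨n, hn⟩ := (httendsto.eventually (eventually_gt_nhds hs)).exists
    exact ⟨n, lt_of_lt_of_le hn (htmono.monotone (Nat.le_succ n))⟩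
  -- the concatenated path in X
  set G : ℝ → X := fun s => if h : ∃ n, s < t (n+1) then P (Nat.find h) s else x 0 with hGdef
  have hGeq : ∀ n, ∀ s ∈ Ico (t n) (t (n+1)), G s = P n s := by
    intro n s hs
    have hex : ∃ m, s < t (m+1) := ⟨n, hs.2⟩
    have hfind : Nat.find hex = n := by
      rw [Nat.find_eq_iff]
      exact ⟨hs.2, fun m hm => not_lt.2 (le_trans (htmono.monotone (by omega : m + 1 ≤ n)) hs.1)⟩
    simp only [hGdef, dif_pos hex, hfind]
  have hGt : ∀ n, G (t n) = x n := fun n => by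
    rw [hGeq n (t n) ⟨le_rfl, htmono (Nat.lt_succ_self n)⟩, hPl n]
  have hGP : ∀ n, EqOn G (P n) (Icc (t n) (t (n+1))) := by
    intro n s hs
    rcases lt_or_eq_of_le hs.2 with h | h
    · exact hGeq n s ⟨hs.1, h⟩
    · rw [h, hGt (n+1), hPr n]
  have hGcont : ∀ n, ContinuousOn G (Icc 0 (t n)) := by
    intro n
    induction n with
    | zero =>
      rw [ht0, Icc_self]
      intro s hs
      rw [mem_singleton_iff] at hs; subst hs
      exact continuousWithinAt_singleton
    | succ m ih =>
      rw [← Icc_union_Icc_eq_Icc (ht01 m).1 (htmono (Nat.lt_succ_self m)).le]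
      exact continuousOn_union_closed isClosed_Icc isClosed_Icc ih
        ((hPcont m).congr (hGP m))
  have hGvar : ∀ n, eVariationOn G (Icc 0 (t n)) ≤ ENNReal.ofReal (1 - (2:ℝ)⁻¹ ^ n) := by
    intro n
    induction n with
    | zero =>
      rw [ht0, Icc_self, eVariationOn.subsingleton G subsingleton_singleton]
      simp
    | succ m ih =>
      have hsplit : eVariationOn G (Icc 0 (t (m+1)))
          = eVariationOn G (Icc 0 (t m)) + eVariationOn G (Icc (t m) (t (m+1))) := by
        rw [← Icc_union_Icc_eq_Icc (ht01 m).1 (htmono (Nat.lt_succ_self m)).le]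
        exact eVariationOn.union G (isGreatest_Icc (ht01 m).1)
          (isLeast_Icc (htmono (Nat.lt_succ_self m)).le)
      have hpiece : eVariationOn G (Icc (t m) (t (m+1))) ≤ ENNReal.ofReal ((2:ℝ)⁻¹ ^ (m+1)) := by
        rw [eVariationOn.eq_of_eqOn (hGP m), hPvar m]
        exact hgv m
      have hm1 : (2:ℝ)⁻¹ ^ m ≤ 1 := pow_le_one₀ (by norm_num) (by norm_num)
      calc eVariationOn G (Icc 0 (t (m+1)))
          = eVariationOn G (Icc 0 (t m)) + eVariationOn G (Icc (t m) (t (m+1))) := hsplit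
        _ ≤ ENNReal.ofReal (1 - (2:ℝ)⁻¹ ^ m) + ENNReal.ofReal ((2:ℝ)⁻¹ ^ (m+1)) :=
            add_le_add ih hpiece
        _ = ENNReal.ofReal (1 - (2:ℝ)⁻¹ ^ (m+1)) := by
            rw [← ENNReal.ofReal_add (by linarith) (by positivity)]
            congr 1; ring
  have hGvar1 : ∀ n, eVariationOn G (Icc 0 (t n)) ≤ ENNReal.ofReal 1 := by
    intro n
    refine (hGvar n).trans (ENNReal.ofReal_le_ofReal ?_)
    have : (0:ℝ) ≤ (2:ℝ)⁻¹ ^ n := by positivity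
    linarith
  -- the limit point downstairs
  have hxc : CauchySeq x := hu.comp_tendsto hφ.tendsto_atTop
  have hyc : CauchySeq (fun n => f (x n)) := hlip.uniformContinuous.comp_cauchySeq hxc
  obtain ⟨y, hy⟩ := cauchySeq_tendsto_of_complete hyc
  -- the concatenated path downstairs, extended to the endpoint
  set c : ℝ → Y := fun s => if s < 1 then f (G s) else y with hcdef
  have hcG : ∀ n, EqOn c (f ∘ G) (Icc 0 (t n)) := by
    intro n s hs
    simp only [hcdef]
    rw [if_pos (lt_of_le_of_lt hs.2 (htlt n))]
    rfl
  have hct : ∀ n, c (t n) = f (x n) := fun n => by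
    simp only [hcdef]; rw [if_pos (htlt n), hGt n]
  have hc1 : c 1 = y := by simp only [hcdef]; rw [if_neg (lt_irrefl 1)]
  have hGrect : ∀ n, IsRectPath G 0 (t n) := fun n =>
    ⟨(ht01 n).1, hGcont n, ne_top_of_le_ne_top ENNReal.ofReal_ne_top (hGvar1 n)⟩
  have hcvar : ∀ n, eVariationOn c (Icc 0 (t n)) = eVariationOn G (Icc 0 (t n)) := fun n => by
    rw [eVariationOn.eq_of_eqOn (hcG n)]
    exact hf.1 G 0 (t n) (hGrect n)
  have hVfin : ∀ n, eVariationOn c (Icc 0 (t n)) ≠ ⊤ := fun n => by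
    rw [hcvar n]; exact ne_top_of_le_ne_top ENNReal.ofReal_ne_top (hGvar1 n)
  -- the cumulative length function
  set e : ℕ → ℝ := fun n => (eVariationOn c (Icc 0 (t n))).toReal with hedef
  have hemono : Monotone e := fun m n hmn =>
    ENNReal.toReal_mono (hVfin n) (eVariationOn.mono c (Icc_subset_Icc_right (htmono.monotone hmn)))
  have hebdd : BddAbove (range e) := by
    refine ⟨1, ?_⟩
    rintro _ ⟨n, rfl⟩
    calc e n ≤ (ENNReal.ofReal 1).toReal :=
          ENNReal.toReal_mono ENNReal.ofReal_ne_top (by rw [hcvar n]; exact hGvar1 n)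
      _ = 1 := by simp
  set L : ℝ := ⨆ n, e n with hLdef
  have heL : Filter.Tendsto e atTop (𝓝 L) := tendsto_atTop_ciSup hemono hebdd
  have heleL : ∀ n, e n ≤ L := fun n => le_ciSup hebdd n
  have hLnn : (0:ℝ) ≤ L := le_trans ENNReal.toReal_nonneg (heleL 0)
  have hsle : ∀ s : ℝ, s < 1 → ∃ n, s ≤ t n := by
    intro s hs
    obtain ⟨n, hn⟩ := hexN s hs
    exact ⟨n+1, hn.le⟩
  have hfinlt : ∀ s : ℝ, s < 1 → eVariationOn c (Icc 0 s) ≠ ⊤ := by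
    intro s hs
    obtain ⟨n, hn⟩ := hsle s hs
    exact ne_top_of_le_ne_top (hVfin n) (eVariationOn.mono c (Icc_subset_Icc_right hn))
  set l : ℝ → ℝ := fun s => if s < 1 then (eVariationOn c (Icc 0 s)).toReal else L with hldef
  have hlmono : Monotone l := by
    intro s s' hss'
    simp only [hldef]
    by_cases h1 : s < 1
    · by_cases h2 : s' < 1
      · rw [if_pos h1, if_pos h2]
        exact ENNReal.toReal_mono (hfinlt s' h2) (eVariationOn.mono c (Icc_subset_Icc_right hss'))
      · rw [if_pos h1, if_neg h2]
        obtain ⟨n, hn⟩ := hsle s h1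
        calc (eVariationOn c (Icc 0 s)).toReal ≤ e n :=
              ENNReal.toReal_mono (hVfin n) (eVariationOn.mono c (Icc_subset_Icc_right hn))
          _ ≤ L := heleL n
    · rw [if_neg h1, if_neg (fun h2 => h1 (lt_of_le_of_lt hss' h2))]
  have hl0 : ∀ s, 0 ≤ l s := by
    intro s
    simp only [hldef]
    split
    · exact ENNReal.toReal_nonneg
    · exact hLnn
  have hl1 : l 1 = L := by simp only [hldef]; rw [if_neg (lt_irrefl 1)]
  have hlet : ∀ n, l (t n) = e n := fun n => by
    simp only [hldef, hedef]; rw [if_pos (htlt n)]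
  -- key estimate below the endpoint
  have hkeylt : ∀ s s' : ℝ, 0 ≤ s → s ≤ s' → s' < 1 →
      edist (c s) (c s') ≤ ENNReal.ofReal (l s' - l s) := by
    intro s s' hs0 hss' h1
    have hs1 : s < 1 := lt_of_le_of_lt hss' h1
    have hadd : eVariationOn c (Icc 0 s') = eVariationOn c (Icc 0 s) + eVariationOn c (Icc s s') := by
      rw [← Icc_union_Icc_eq_Icc hs0 hss']
      exact eVariationOn.union c (isGreatest_Icc hs0) (isLeast_Icc hss')
    have hfin_t := hfinlt s' h1
    have hfin_s := hfinlt s hs1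
    have hfm : eVariationOn c (Icc s s') ≠ ⊤ := by
      intro hh
      apply hfin_t
      rw [hadd, hh, add_top]
    have hed : edist (c s) (c s') ≤ eVariationOn c (Icc s s') :=
      eVariationOn.edist_le c ⟨le_rfl, hss'⟩ ⟨hss', le_rfl⟩
    have htr := congrArg ENNReal.toReal hadd
    rw [ENNReal.toReal_add hfin_s hfm] at htr
    have hmid : (eVariationOn c (Icc s s')).toReal = l s' - l s := by
      simp only [hldef]
      rw [if_pos h1, if_pos hs1]
      linarith
    have : eVariationOn c (Icc s s') = ENNReal.ofReal (l s' - l s) := by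
      rw [← hmid, ENNReal.ofReal_toReal hfm]
    rwa [this] at hed
  have hkey : ∀ s s' : ℝ, 0 ≤ s → s ≤ s' → s' ≤ 1 →
      edist (c s) (c s') ≤ ENNReal.ofReal (l s' - l s) := by
    intro s s' hs0 hss' hs'1
    rcases lt_or_ge s' 1 with h1 | h1
    · exact hkeylt s s' hs0 hss' h1
    · have hs'e : s' = 1 := le_antisymm hs'1 h1
      subst hs'e
      rcases lt_or_ge s 1 with hs1 | hs1
      · have hcy : Filter.Tendsto (fun n => c (t n)) atTop (𝓝 y) := by
          have hfx : (fun n => c (t n)) = fun n => f (x n) := funext hct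
          rw [hfx]; exact hy
        have hedist : Filter.Tendsto (fun n => edist (c s) (c (t n))) atTop
            (𝓝 (edist (c s) (c 1))) := by
          rw [hc1]
          exact Filter.Tendsto.edist tendsto_const_nhds hcy
        refine le_of_tendsto hedist ?_
        have hev : ∀ᶠ n in atTop, s ≤ t n :=
          (httendsto.eventually (eventually_gt_nhds hs1)).mono (fun n h => h.le)
        filter_upwards [hev] with n hn
        refine (hkeylt s (t n) hs0 hn (htlt n)).trans (ENNReal.ofReal_le_ofReal ?_)
        have h2 : l (t n) ≤ L := by rw [hlet n]; exact heleL n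
        rw [hl1]
        linarith
      · have hse : s = 1 := le_antisymm hss' hs1
        subst hse
        simp
  -- total variation bound
  have hcvar1 : eVariationOn c (Icc 0 1) ≤ ENNReal.ofReal L := by
    unfold eVariationOn
    refine iSup_le ?_
    rintro ⟨n, u', hu', hus⟩
    calc (∑ i ∈ Finset.range n, edist (c (u' (i+1))) (c (u' i)))
        ≤ ∑ i ∈ Finset.range n, ENNReal.ofReal (l (u' (i+1)) - l (u' i)) := by
          refine Finset.sum_le_sum fun i _ => ?_
          rw [edist_comm]
          exact hkey (u' i) (u' (i+1)) (hus i).1 (hu' (Nat.le_succ i)) (hus (i+1)).2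
      _ = ENNReal.ofReal (∑ i ∈ Finset.range n, (l (u' (i+1)) - l (u' i))) :=
          (ENNReal.ofReal_sum_of_nonneg (fun i _ => sub_nonneg.2 (hlmono (hu' (Nat.le_succ i))))).symm
      _ = ENNReal.ofReal (l (u' n) - l (u' 0)) := by
          rw [Finset.sum_range_sub (fun i => l (u' i))]
      _ ≤ ENNReal.ofReal L := by
          refine ENNReal.ofReal_le_ofReal ?_
          have h1 : l (u' n) ≤ L := by rw [← hl1]; exact hlmono (hus n).2
          have h2 : 0 ≤ l (u' 0) := hl0 _
          linarith
  -- continuity of c on [0,1]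
  have hccont : ContinuousOn c (Icc 0 1) := by
    intro τ hτ
    rcases lt_or_ge τ 1 with hτ1 | hτ1
    · obtain ⟨n, hn⟩ := hexN τ hτ1
      have h1 : ContinuousOn c (Icc 0 (t (n+1))) :=
        (hlip.continuous.comp_continuousOn (hGcont (n+1))).congr (hcG (n+1))
      have h2 : ContinuousWithinAt c (Icc 0 (t (n+1))) τ := h1 τ ⟨hτ.1, hn.le⟩
      refine h2.mono_of_mem_nhdsWithin ?_
      have hmem : Icc 0 1 ∩ Iio (t (n+1)) ∈ 𝓝[Icc (0:ℝ) 1] τ :=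
        inter_mem self_mem_nhdsWithin (mem_nhdsWithin_of_mem_nhds (Iio_mem_nhds hn))
      exact Filter.mem_of_superset hmem (fun z hz => ⟨hz.1.1, hz.2.le⟩)
    · have hτe : τ = 1 := le_antisymm hτ.2 hτ1
      subst hτe
      show Filter.Tendsto c (𝓝[Icc (0:ℝ) 1] 1) (𝓝 (c 1))
      rw [hc1, Metric.tendsto_nhds]
      intro ε hε
      have hLe : ∀ᶠ n in atTop, L - e n < ε := by
        have h2 : Filter.Tendsto (fun n => L - e n) atTop (𝓝 (L - L)) :=
          Filter.Tendsto.sub tendsto_const_nhds heL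
        rw [sub_self] at h2
        exact h2.eventually (eventually_lt_nhds hε)
      obtain ⟨n, hn⟩ := hLe.exists
      have hev : Ioi (t n) ∩ Icc 0 1 ∈ 𝓝[Icc (0:ℝ) 1] 1 :=
        inter_mem (mem_nhdsWithin_of_mem_nhds (Ioi_mem_nhds (htlt n))) self_mem_nhdsWithin
      filter_upwards [hev] with s hs
      have hkey1 := hkey s 1 hs.2.1 hs.2.2 le_rfl
      rw [hc1] at hkey1
      have hnn : 0 ≤ l 1 - l s := sub_nonneg.2 (hlmono hs.2.2)
      have hd1 : dist (c s) y ≤ l 1 - l s := (edist_le_ofReal hnn).mp hkey1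
      have hls : l (t n) ≤ l s := hlmono hs.1.le
      have hen : e n = l (t n) := (hlet n).symm
      calc dist (c s) y ≤ l 1 - l s := hd1
        _ ≤ L - e n := by rw [hl1]; linarith
        _ < ε := hn
  -- lift the path
  have hrect1 : IsRectPath c 0 1 :=
    ⟨zero_le_one, hccont, ne_top_of_le_ne_top ENNReal.ofReal_ne_top hcvar1⟩
  have hG0 : G 0 = x 0 := by rw [← ht0]; exact hGt 0
  have hq : f (x 0) = c 0 := by
    simp only [hcdef]
    rw [if_pos (by norm_num : (0:ℝ) < 1), hG0]
  obtain ⟨⟨cL, hcLlift, hcLvar⟩, -⟩ := hf.2 c 0 1 hrect1 (x 0) hq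
  -- the lift agrees with G at grid points
  have hun : ∀ n, cL (t n) = x n := by
    intro n
    have hcfin : eVariationOn c (Icc 0 1) ≠ ⊤ :=
      ne_top_of_le_ne_top ENNReal.ofReal_ne_top hcvar1
    have hrectn : IsRectPath c 0 (t n) :=
      ⟨(ht01 n).1, hccont.mono (Icc_subset_Icc_right (htlt n).le),
        ne_top_of_le_ne_top hcfin (eVariationOn.mono c (Icc_subset_Icc_right (htlt n).le))⟩
    have h1 : IsLift f c 0 (t n) (x 0) cL :=
      ⟨hcLlift.1.mono (Icc_subset_Icc_right (htlt n).le), hcLlift.2.1,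
        fun s hs => hcLlift.2.2 s ⟨hs.1, hs.2.trans (htlt n).le⟩⟩
    have h2 : IsLift f c 0 (t n) (x 0) G :=
      ⟨hGcont n, hG0, fun s hs => (hcG n hs).symm⟩
    have h3 := (hf.2 c 0 (t n) hrectn (x 0) hq).2 cL G h1 h2
      (show t n ∈ Icc 0 (t n) from ⟨(ht01 n).1, le_rfl⟩)
    rw [h3]
    exact hGt n
  -- conclude
  have htend : Filter.Tendsto (fun n => cL (t n)) atTop (𝓝 (cL 1)) := by
    have h1 : ContinuousWithinAt cL (Icc 0 1) 1 := hcLlift.1 1 ⟨zero_le_one, le_rfl⟩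
    have h2 : Filter.Tendsto t atTop (𝓝[Icc (0:ℝ) 1] 1) :=
      tendsto_nhdsWithin_of_tendsto_nhds_of_eventually_within t httendsto
        (Filter.Eventually.of_forall ht01)
    exact h1.tendsto.comp h2
  exact ⟨cL 1, tendsto_nhds_of_cauchySeq_of_subseq hu hφ.tendsto_atTop
    (htend.congr (fun n => hun n))⟩

end URLHelpers

/-- If `f : X → Y` is a URL-map between length spaces, then `X` is
complete if and only if `Y` is complete. -/
theorem urlMap_complete_iff {X Y : Type*} [MetricSpace X] [MetricSpace Y]
    (hX : IsLengthSpace X) (hY : IsLengthSpace Y) (f : X → Y) (hf : IsURLMap f) :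
    CompleteSpace X ↔ CompleteSpace Y := by
  constructor
  · exact fun h => urlmap_forward hX hY hf h
  · exact fun h => urlmap_reverse hX hf h
end

section
/- Every URL-map f : X → Y between length spaces is a weak submetry, i.e., for every open ball U(p,r) in X, f(U(p,r)) = U(f(p),r). -/
open Set

/-! A path realising `d(x, y)` up to `ε` in `X` is mapped to a path of the same length in `Y`, so
`f` is 1-Lipschitz. Conversely, a path realising `d(f q, y)` up to `ε` in `Y` lifts to a path from
`q` of the same length, whose endpoint is a point of `f⁻¹(y)` within `d(f q, y) + ε` of `q`. -/

lemma dist_lt_of_eVariationOn_lt {E : Type*} [PseudoMetricSpace E] {c : ℝ → E} {a b s : ℝ}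
    (hab : a ≤ b) (hc : eVariationOn c (Icc a b) < ENNReal.ofReal s) : dist (c a) (c b) < s :=
  edist_lt_ofReal.mp <|
    (eVariationOn.edist_le c (left_mem_Icc.mpr hab) (right_mem_Icc.mpr hab)).trans_lt hc

namespace IsURLMap

variable {X Y : Type*} [MetricSpace X] [MetricSpace Y] {f : X → Y}

lemma dist_le (hX : IsLengthSpace X) (hf : IsURLMap f) (x y : X) :
    dist (f x) (f y) ≤ dist x y := by
  refine le_of_forall_pos_le_add fun ε hε => ?_
  obtain ⟨c, b, hb, hc, rfl, rfl, hlen⟩ := hX.2 x y ε hε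
  have hfc : eVariationOn (f ∘ c) (Icc 0 b) < ENNReal.ofReal (dist (c 0) (c b) + ε) :=
    (hf.1 c 0 b ⟨hb, hc, hlen.ne_top⟩).trans_lt hlen
  exact (dist_lt_of_eVariationOn_lt hb hfc).le

lemma exists_dist_lt (hY : IsLengthSpace Y) (hf : IsURLMap f) (q : X) (y : Y) {ε : ℝ}
    (hε : 0 < ε) : ∃ w, f w = y ∧ dist q w < dist (f q) y + ε := by
  obtain ⟨c, b, hb, hc, hc0, hcb, hlen⟩ := hY.2 (f q) y ε hε
  obtain ⟨⟨cL, ⟨hcL, hcL0, hcLc⟩, hcLfin⟩, -⟩ := hf.2 c 0 b ⟨hb, hc, hlen.ne_top⟩ q hc0.symm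
  have hlenL : eVariationOn cL (Icc 0 b) = eVariationOn c (Icc 0 b) :=
    (hf.1 cL 0 b ⟨hb, hcL, hcLfin⟩).symm.trans (eVariationOn.eq_of_eqOn hcLc)
  refine ⟨cL b, (hcLc b (right_mem_Icc.mpr hb)).trans hcb, ?_⟩
  simpa only [hcL0] using dist_lt_of_eVariationOn_lt hb (hlenL.trans_lt hlen)

end IsURLMap

/-- Every URL-map between length spaces is a weak submetry:
`f(U(p,r)) = U(f(p),r)` for every open ball. -/
theorem urlMap_weak_submetry {X Y : Type*} [MetricSpace X] [MetricSpace Y]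
    (hX : IsLengthSpace X) (hY : IsLengthSpace Y) (f : X → Y) (hf : IsURLMap f) :
    ∀ (p : X) (r : ℝ), f '' Metric.ball p r = Metric.ball (f p) r := by
  intro p r
  refine Subset.antisymm ?_ fun y hy => ?_
  · rintro _ ⟨x, hx, rfl⟩
    exact (hf.dist_le hX x p).trans_lt hx
  · rw [Metric.mem_ball] at hy
    obtain ⟨w, hwy, hw⟩ := hf.exists_dist_lt hY p y (sub_pos.mpr hy)
    refine ⟨w, ?_, hwy⟩
    rw [Metric.mem_ball, dist_comm]
    linarith [dist_comm y (f p)]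
end

section
/- If f : X → Y is a URL-map between length spaces and Y is a geodesic space, then f is a submetry: f(B(p,r)) = B(f(p),r) for every closed ball B(p,r) in X. -/
open Set

/-- A geodesic space: a metric space with at least two points in which any two points
are joined by a geodesic, i.e. an arclength-parameterized curve whose length equals
the distance between its endpoints. -/
def IsGeodesicSpace (Y : Type*) [MetricSpace Y] : Prop :=
  (∃ x y : Y, x ≠ y) ∧
  ∀ x y : Y, ∃ γ : ℝ → Y, γ 0 = x ∧ γ (dist x y) = y ∧
    ∀ s ∈ Icc 0 (dist x y), ∀ t ∈ Icc 0 (dist x y), dist (γ s) (γ t) = |s - t|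

/-!
A URL-map preserves lengths of paths, so in a length space it is `1`-Lipschitz and maps
`B(p,r)` into `B(f(p),r)`. Conversely, given `y` with `d(f(p),y) ≤ r`, lift a geodesic from
`f(p)` to `y` to a path starting at `p`: the lift has the same length `d(f(p),y)`, so its
endpoint lies in `B(p,r)` and is mapped to `y`.
-/

open scoped NNReal

theorem LipschitzOnWith.eVariationOn_Icc_le {E : Type*} [PseudoEMetricSpace E] {γ : ℝ → E}
    {K : ℝ≥0} {a b : ℝ} (hγ : LipschitzOnWith K γ (Icc a b)) :
    eVariationOn γ (Icc a b) ≤ K * ENNReal.ofReal (b - a) := by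
  simpa [eVariationOn_id_Icc] using hγ.comp_eVariationOn_le (g := id) (mapsTo_id _)

theorem lipschitzWith_one_of_eVariationOn_comp_eq {X Y : Type*} [MetricSpace X] [MetricSpace Y]
    (hX : IsLengthSpace X) {f : X → Y}
    (hf : ∀ (c : ℝ → X) (a b : ℝ), IsRectPath c a b →
      eVariationOn (f ∘ c) (Icc a b) = eVariationOn c (Icc a b)) :
    LipschitzWith 1 f := by
  refine LipschitzWith.of_dist_le_mul fun x y ↦ ?_
  rw [NNReal.coe_one, one_mul]
  refine le_of_forall_pos_lt_add fun ε hε ↦ ?_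
  obtain ⟨c, b, hb, hc, hc0, hcb, hlen⟩ := hX.2 x y ε hε
  have hedist : edist (f x) (f y) < ENNReal.ofReal (dist x y + ε) :=
    calc edist (f x) (f y) = edist ((f ∘ c) 0) ((f ∘ c) b) := by simp [hc0, hcb]
      _ ≤ eVariationOn (f ∘ c) (Icc 0 b) :=
        eVariationOn.edist_le _ (left_mem_Icc.mpr hb) (right_mem_Icc.mpr hb)
      _ = eVariationOn c (Icc 0 b) := hf c 0 b ⟨hb, hc, hlen.ne_top⟩
      _ < ENNReal.ofReal (dist x y + ε) := hlen
  rwa [edist_dist, ENNReal.ofReal_lt_ofReal_iff_of_nonneg dist_nonneg] at hedist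

theorem IsGeodesicSpace.exists_isRectPath {Y : Type*} [MetricSpace Y] (hY : IsGeodesicSpace Y)
    (x y : Y) : ∃ γ : ℝ → Y, IsRectPath γ 0 (dist x y) ∧ γ 0 = x ∧ γ (dist x y) = y ∧
      eVariationOn γ (Icc 0 (dist x y)) ≤ ENNReal.ofReal (dist x y) := by
  obtain ⟨γ, hγ0, hγd, hγ⟩ := hY.2 x y
  have hlip : LipschitzOnWith 1 γ (Icc 0 (dist x y)) :=
    LipschitzOnWith.of_dist_le_mul fun s hs t ht ↦ by simp [hγ s hs t ht, Real.dist_eq]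
  have hlen := hlip.eVariationOn_Icc_le
  rw [ENNReal.coe_one, one_mul, sub_zero] at hlen
  exact ⟨γ, ⟨dist_nonneg, hlip.continuousOn, ne_top_of_le_ne_top ENNReal.ofReal_ne_top hlen⟩,
    hγ0, hγd, hlen⟩

theorem IsURLMap.exists_edist_le_eVariationOn {X Y : Type*} [MetricSpace X] [MetricSpace Y]
    {f : X → Y} (hf : IsURLMap f) {c : ℝ → Y} {a b : ℝ} (hc : IsRectPath c a b) {q : X}
    (hq : f q = c a) : ∃ x, f x = c b ∧ edist q x ≤ eVariationOn c (Icc a b) := by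
  obtain ⟨⟨cL, ⟨hcont, hcLa, hlift⟩, hfin⟩, -⟩ := hf.2 c a b hc q hq
  have hab := hc.1
  refine ⟨cL b, hlift b (right_mem_Icc.mpr hab), ?_⟩
  calc edist q (cL b) = edist (cL a) (cL b) := by rw [hcLa]
    _ ≤ eVariationOn cL (Icc a b) :=
      eVariationOn.edist_le _ (left_mem_Icc.mpr hab) (right_mem_Icc.mpr hab)
    _ = eVariationOn (f ∘ cL) (Icc a b) := (hf.1 cL a b ⟨hab, hcont, hfin⟩).symm
    _ = eVariationOn c (Icc a b) := eVariationOn.eq_of_eqOn hlift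

theorem urlMap_submetry_general {X Y : Type*} [MetricSpace X] [MetricSpace Y]
    (hX : IsLengthSpace X) (hYg : IsGeodesicSpace Y)
    (f : X → Y) (hf : IsURLMap f) :
    ∀ (p : X) (r : ℝ), f '' Metric.closedBall p r = Metric.closedBall (f p) r := by
  intro p r
  have hlip : LipschitzWith 1 f := lipschitzWith_one_of_eVariationOn_comp_eq hX hf.1
  refine Subset.antisymm ?_ fun y hy ↦ ?_
  · simpa using (hlip.mapsTo_closedBall p r).image_subset
  · obtain ⟨γ, hγ, hγ0, hγd, hlen⟩ := hYg.exists_isRectPath (f p) y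
    obtain ⟨x, hfx, hpx⟩ := hf.exists_edist_le_eVariationOn hγ hγ0.symm
    refine ⟨x, ?_, hfx.trans hγd⟩
    replace hpx := hpx.trans hlen
    rw [edist_dist, ENNReal.ofReal_le_ofReal_iff dist_nonneg] at hpx
    rw [Metric.mem_closedBall, dist_comm] at hy ⊢
    exact hpx.trans hy

/-- If `f : X → Y` is a URL-map between length spaces and `Y` is a
geodesic space, then `f` is a submetry: `f(B(p,r)) = B(f(p),r)` for every closed
ball. -/
theorem urlMap_submetry {X Y : Type*} [MetricSpace X] [MetricSpace Y]
    (hX : IsLengthSpace X) (hY : IsLengthSpace Y) (hYg : IsGeodesicSpace Y)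
    (f : X → Y) (hf : IsURLMap f) :
    ∀ (p : X) (r : ℝ), f '' Metric.closedBall p r = Metric.closedBall (f p) r :=
  urlMap_submetry_general hX hYg f hf
end

section
/- Let X, Y, Z be length spaces with basepoint-preserving continuous maps h : X → Z, g : Z → Y, f : X → Y satisfying f = g∘h. If g is a URL-map, then f is a URL-map if and only if h is a URL-map; moreover, given g, each of f and h is uniquely determined by the other. -/
open Set

/-!
Lifts through a URL-map `g` are unique, so whenever a continuous path `γ` in `Z` has image
`g ∘ γ` rectifiable, `γ` is itself the rectifiable lift of `g ∘ γ`; hence lengths and lifts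
can be transported both ways along `f = g ∘ h`. Uniqueness of `h` given `f` and `g` follows
by lifting `f ∘ γ` for a rectifiable path `γ` from `x₀` to an arbitrary point, which exists
because `X` is a length space.
-/

section

variable {X Y Z : Type*} [MetricSpace X] [MetricSpace Y] [MetricSpace Z]

theorem IsLengthSpace.exists_isRectPath (hX : IsLengthSpace X) (x y : X) :
    ∃ (c : ℝ → X) (b : ℝ), IsRectPath c 0 b ∧ c 0 = x ∧ c b = y := by
  obtain ⟨c, b, hb, hc, hcx, hcy, hvar⟩ := hX.2 x y 1 one_pos
  exact ⟨c, b, ⟨hb, hc, hvar.ne_top⟩, hcx, hcy⟩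

namespace IsLift

variable {a b : ℝ}

theorem self {c : ℝ → Z} (hc : ContinuousOn c (Icc a b)) (g : Z → Y) :
    IsLift g (g ∘ c) a b (c a) c :=
  ⟨hc, rfl, fun _ _ => rfl⟩

theorem comp_left {f : X → Y} {c : ℝ → Y} {q : X} {cL : ℝ → X}
    (hL : IsLift f c a b q cL) (g : Y → Z) : IsLift (g ∘ f) (g ∘ c) a b q cL :=
  ⟨hL.1, hL.2.1, fun t ht => congrArg g (hL.2.2 t ht)⟩

theorem map {g : Z → Y} {h : X → Z} {c : ℝ → Y} {q : X} {cL : ℝ → X}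
    (hL : IsLift (g ∘ h) c a b q cL) (hh : Continuous h) : IsLift g c a b (h q) (h ∘ cL) :=
  ⟨hh.comp_continuousOn hL.1, congrArg h hL.2.1, hL.2.2⟩

theorem of_comp {g : Z → Y} {h : X → Z} {c : ℝ → Y} {cZ : ℝ → Z} {q : X} {cL : ℝ → X}
    (hL : IsLift (g ∘ h) c a b q cL) (hcZ : EqOn (h ∘ cL) cZ (Icc a b)) :
    IsLift h cZ a b q cL :=
  ⟨hL.1, hL.2.1, fun _ ht => hcZ ht⟩

theorem trans {g : Z → Y} {h : X → Z} {c : ℝ → Y} {cZ : ℝ → Z} {q : X} {cL : ℝ → X}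
    (hZ : IsLift g c a b (h q) cZ) (hL : IsLift h cZ a b q cL) : IsLift (g ∘ h) c a b q cL :=
  ⟨hL.1, hL.2.1, fun t ht => by simp only [Function.comp_apply, hL.2.2 t ht, hZ.2.2 t ht]⟩

end IsLift

namespace IsURLMap

variable {g : Z → Y} {a b : ℝ}

theorem isRectPath_comp (hg : IsURLMap g) (hgc : Continuous g) {c : ℝ → Z}
    (hc : IsRectPath c a b) : IsRectPath (g ∘ c) a b :=
  ⟨hc.1, hgc.comp_continuousOn hc.2.1, by rw [hg.1 c a b hc]; exact hc.2.2⟩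

theorem exists_lift (hg : IsURLMap g) {c : ℝ → Y} (hc : IsRectPath c a b) {q : Z}
    (hq : g q = c a) : ∃ cL, IsLift g c a b q cL ∧ eVariationOn cL (Icc a b) ≠ ⊤ :=
  (hg.2 c a b hc q hq).1

theorem eqOn_of_isLift (hg : IsURLMap g) {c : ℝ → Y} (hc : IsRectPath c a b) {q : Z}
    {cL cL' : ℝ → Z} (hL : IsLift g c a b q cL) (hL' : IsLift g c a b q cL') :
    EqOn cL cL' (Icc a b) :=
  (hg.2 c a b hc q (hL.2.1 ▸ hL.2.2 a (left_mem_Icc.2 hc.1))).2 cL cL' hL hL'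

theorem isRectPath_of_isRectPath_comp (hg : IsURLMap g) {c : ℝ → Z}
    (hc : ContinuousOn c (Icc a b)) (hgc : IsRectPath (g ∘ c) a b) : IsRectPath c a b := by
  obtain ⟨cL, hL, hLfin⟩ := hg.exists_lift hgc rfl
  have hcL : EqOn c cL (Icc a b) := hg.eqOn_of_isLift hgc (IsLift.self hc g) hL
  exact ⟨hgc.1, hc, eVariationOn.eq_of_eqOn hcL ▸ hLfin⟩

variable {h : X → Z}

theorem comp (hg : IsURLMap g) (hh : IsURLMap h) (hhc : Continuous h) : IsURLMap (g ∘ h) := by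
  refine ⟨fun c a b hc => ?_, fun c a b hc q hq => ?_⟩
  · rw [Function.comp_assoc, hg.1 _ a b (hh.isRectPath_comp hhc hc), hh.1 c a b hc]
  obtain ⟨cZ, hZ, hZfin⟩ := hg.exists_lift hc hq
  have hcZ : IsRectPath cZ a b := ⟨hc.1, hZ.1, hZfin⟩
  refine ⟨?_, fun d d' hd hd' => ?_⟩
  · obtain ⟨cL, hL, hLfin⟩ := hh.exists_lift hcZ hZ.2.1.symm
    exact ⟨cL, hZ.trans hL, hLfin⟩
  · have hlift : ∀ e, IsLift (g ∘ h) c a b q e → IsLift h cZ a b q e := fun e he =>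
      he.of_comp (hg.eqOn_of_isLift hc (he.map hhc) hZ)
    exact hh.eqOn_of_isLift hcZ (hlift d hd) (hlift d' hd')

theorem of_comp (hg : IsURLMap g) (hgh : IsURLMap (g ∘ h)) (hgc : Continuous g)
    (hhc : Continuous h) : IsURLMap h := by
  refine ⟨fun c a b hc => ?_, fun c a b hc q hq => ?_⟩
  · have hhc' : IsRectPath (h ∘ c) a b := hg.isRectPath_of_isRectPath_comp
      (hhc.comp_continuousOn hc.2.1) (hgh.isRectPath_comp (hgc.comp hhc) hc)
    rw [← hg.1 _ a b hhc', ← Function.comp_assoc, hgh.1 c a b hc]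
  have hgcRect : IsRectPath (g ∘ c) a b := hg.isRectPath_comp hgc hc
  refine ⟨?_, fun d d' hd hd' => hgh.eqOn_of_isLift hgcRect (hd.comp_left g) (hd'.comp_left g)⟩
  obtain ⟨cL, hL, hLfin⟩ := hgh.exists_lift hgcRect (congrArg g hq)
  have hself : IsLift g (g ∘ c) a b (h q) c := hq ▸ IsLift.self hc.2.1 g
  exact ⟨cL, hL.of_comp (hg.eqOn_of_isLift hgcRect (hL.map hhc) hself), hLfin⟩

theorem eq_of_comp_eq (hg : IsURLMap g) (hgh : IsURLMap (g ∘ h)) (hX : IsLengthSpace X)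
    (hgc : Continuous g) (hhc : Continuous h) {h' : X → Z} (hh'c : Continuous h') {x₀ : X}
    (h₀ : h x₀ = h' x₀) (heq : g ∘ h = g ∘ h') : h = h' := by
  funext x
  obtain ⟨c, b, hc, hc0, hcb⟩ := hX.exists_isRectPath x₀ x
  have hlift : IsLift g (g ∘ (h ∘ c)) 0 b (h (c 0)) (h' ∘ c) :=
    ⟨hh'c.comp_continuousOn hc.2.1, by simp [hc0, h₀], fun t _ => congrFun heq.symm (c t)⟩
  have hcb' := hg.eqOn_of_isLift (hgh.isRectPath_comp (hgc.comp hhc) hc)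
    (IsLift.self (hhc.comp_continuousOn hc.2.1) g) hlift (right_mem_Icc.2 hc.1)
  simpa [hcb] using hcb'

end IsURLMap

end

theorem urlMap_two_out_of_three_general {X Y Z : Type*} [MetricSpace X] [MetricSpace Y]
    [MetricSpace Z] (hX : IsLengthSpace X) (x₀ : X) (z₀ : Z)
    (h : X → Z) (g : Z → Y) (f : X → Y)
    (hcont : Continuous h) (gcont : Continuous g)
    (hbase : h x₀ = z₀)
    (hfg : f = g ∘ h) (hg : IsURLMap g) :
    (IsURLMap f ↔ IsURLMap h) ∧
    -- `f` is uniquely determined by `h` and `g`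
    (∀ f' : X → Y, f' = g ∘ h → f' = f) ∧
    -- `h` is uniquely determined by `f` and `g`
    (IsURLMap f → ∀ h' : X → Z, Continuous h' → h' x₀ = z₀ → g ∘ h' = f → h' = h) := by
  subst hfg
  refine ⟨⟨fun hf => hg.of_comp hf gcont hcont, fun hh => hg.comp hh hcont⟩,
    fun _ hf' => hf', fun hf h' hh' h'base hgh' => ?_⟩
  exact (hg.eq_of_comp_eq hf hX gcont hcont hh' (hbase.trans h'base.symm) hgh'.symm).symm

/-- Let `X, Y, Z` be length spaces with basepoint-preserving
continuous maps `h : X → Z`, `g : Z → Y`, `f : X → Y` satisfying `f = g ∘ h`.  If `g`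
is a URL-map, then `f` is a URL-map if and only if `h` is a URL-map; moreover, given
`g`, each of `f` and `h` is uniquely determined by the other. -/
theorem urlMap_two_out_of_three {X Y Z : Type*} [MetricSpace X] [MetricSpace Y]
    [MetricSpace Z] (hX : IsLengthSpace X) (hY : IsLengthSpace Y)
    (hZ : IsLengthSpace Z) (x₀ : X) (z₀ : Z) (y₀ : Y)
    (h : X → Z) (g : Z → Y) (f : X → Y)
    (hcont : Continuous h) (gcont : Continuous g) (fcont : Continuous f)
    (hbase : h x₀ = z₀) (gbase : g z₀ = y₀) (fbase : f x₀ = y₀)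
    (hfg : f = g ∘ h) (hg : IsURLMap g) :
    (IsURLMap f ↔ IsURLMap h) ∧
    -- `f` is uniquely determined by `h` and `g`
    (∀ f' : X → Y, f' = g ∘ h → f' = f) ∧
    -- `h` is uniquely determined by `f` and `g`
    (IsURLMap f → ∀ h' : X → Z, Continuous h' → h' x₀ = z₀ → g ∘ h' = f → h' = h) :=
  urlMap_two_out_of_three_general hX x₀ z₀ h g f hcont gcont hbase hfg hg
end
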